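/- arXiv:2202.01960 — 2 statements merged into one kernel-verified Lean document; each statement's English description precedes it below -/
import Mathlib

section
/- Let p be an odd prime and let X be a PSCA(v, p, λ) with v not divisible by p. For a symbol w ∈ [v] and 0 ≤ j ≤ p−1, let y_w(j) = Σ_{i ≡ j (mod p)} d_w(i). Then y_w(j) ≡ 0 (mod p) for every j ∈ {0,…,p−1}. -/
/-!
Let `P_π` be the position of `w` in `π`. Every sequence of `t ≤ p` distinct symbols is covered by
exactly `λ p! / t!` permutations of `X` (insert a new symbol in each of the `t + 1` possible places
and induct downwards from `t = p`). Counting the pairs `(π, s)` with `s` a sequence of `a + 1`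
distinct symbols ending in `w` and covered by `π` gives
`∑_π C(P_π, a) = (v - 1)_a · λ p! / (a + 1)!`, which is divisible by `p` for every `a < p`:
through `p! / (a + 1)!` when `a + 1 < p`, and for `a = p - 1` because `p ∤ v` makes one of
`v - 1, …, v - p + 1` a multiple of `p`. By Lucas, `C(P, a) ≡ C(P mod p, a)` for `a < p`, so
`∑_r y_w(r) C(r, a) ≡ 0 (mod p)` for all `a < p`, and this triangular system forces `y_w(r) ≡ 0`.
-/

open scoped Classical

/-- A permutation `π` of `[v]` covers a sequence `s` of `t` distinct symbols if the
symbols appear in `π` in the given order, i.e. `π⁻¹(s 0) < ⋯ < π⁻¹(s (t-1))`. -/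
def Covers {v t : ℕ} (π : Equiv.Perm (Fin v)) (s : Fin t → Fin v) : Prop :=
  StrictMono fun i => π.symm (s i)

/-- `X` is a perfect sequence covering array PSCA(v, t, λ): every sequence of `t`
distinct symbols of `[v]` is covered by exactly `λ` permutations of `X` (with multiplicity). -/
def IsPSCA (v t l : ℕ) (X : Multiset (Equiv.Perm (Fin v))) : Prop :=
  ∀ s : Fin t → Fin v, Function.Injective s → X.countP (fun π => Covers π s) = l

/-- `dcount v X w j` is the number of permutations `π` in `X` (with multiplicity)
such that `π(j) = w`. -/
noncomputable def dcount (v : ℕ) (X : Multiset (Equiv.Perm (Fin v))) (w : Fin v) (j : ℕ) : ℕ :=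
  X.countP fun π => ∃ p : Fin v, (p : ℕ) = j ∧ π p = w

open Finset Function

namespace Multiset

variable {ι α : Type*}

theorem sum_map_ite_eq_countP_mul (X : Multiset α) (P : α → Prop) [DecidablePred P] (c : ℕ) :
    (X.map fun a => if P a then c else 0).sum = X.countP P * c := by
  induction X using Multiset.induction_on with
  | empty => simp
  | cons a X ih => by_cases h : P a <;> simp [h, ih, add_mul, add_comm]

theorem sum_countP_mul (s : Finset ι) (X : Multiset α) (P : ι → α → Prop)
    [∀ i, DecidablePred (P i)] (c : ι → ℕ) :
    ∑ i ∈ s, X.countP (P i) * c i = (X.map fun a => ∑ i ∈ s with P i a, c i).sum := by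
  simp only [sum_filter, sum_map_sum, sum_map_ite_eq_countP_mul]

end Multiset

theorem Nat.dvd_descFactorial_pred_of_not_dvd {p v : ℕ} (hp : 0 < p) (hpv : ¬ p ∣ v) :
    p ∣ (v - 1).descFactorial (p - 1) := by
  have hmod : 0 < v % p := Nat.pos_of_ne_zero fun h => hpv (Nat.dvd_of_mod_eq_zero h)
  have hlt : v % p < p := Nat.mod_lt v hp
  have hle : v % p ≤ v := Nat.mod_le v p
  rw [Nat.descFactorial_eq_prod_range]
  -- among the factors `v - 1 - i`, `i < p - 1`, the one with `i = v % p - 1` is `v - v % p`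
  refine (Nat.dvd_sub_mod v).trans ?_
  rw [show v - v % p = v - 1 - (v % p - 1) by omega]
  exact dvd_prod_of_mem _ (mem_range.2 (by omega))

theorem ZMod.natCast_choose_mod {p : ℕ} [Fact p.Prime] {a : ℕ} (hap : a < p) (n : ℕ) :
    (((n % p).choose a : ℕ) : ZMod p) = (n.choose a : ℕ) := by
  rw [ZMod.natCast_eq_natCast_iff]
  simpa [Nat.mod_eq_of_lt hap, Nat.div_eq_of_lt hap] using
    (Choose.choose_modEq_choose_mod_mul_choose_div_nat (n := n) (k := a) (p := p)).symm

theorem eq_zero_of_sum_mul_choose_eq_zero {R : Type*} [Semiring R] {n : ℕ} {c : ℕ → R}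
    (h : ∀ a < n, ∑ r ∈ range n, c r * r.choose a = 0) {r : ℕ} (hr : r < n) : c r = 0 := by
  have hsum := h r hr
  rwa [sum_eq_single r (fun m hm hmr => ?_) (fun h => absurd (mem_range.2 hr) h),
    Nat.choose_self, Nat.cast_one, mul_one] at hsum
  rcases Nat.lt_or_gt_of_ne hmr with hlt | hgt
  · rw [Nat.choose_eq_zero_of_lt hlt, Nat.cast_zero, mul_zero]
  · rw [eq_zero_of_sum_mul_choose_eq_zero h (mem_range.1 hm), zero_mul]
termination_by n - r

namespace Fin

variable {n : ℕ} {α β : Type*}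

theorem comp_insertNth (f : α → β) (q : Fin (n + 1)) (x : α) (s : Fin n → α) :
    f ∘ q.insertNth x s = q.insertNth (f x) (f ∘ s) := by
  rw [← cons_comp_cycleRange, ← Function.comp_assoc, comp_cons, cons_comp_cycleRange]

theorem insertNth_injective_iff {q : Fin (n + 1)} {x : α} {s : Fin n → α} :
    Injective (q.insertNth x s) ↔ Injective s ∧ x ∉ Set.range s := by
  rw [← cons_comp_cycleRange, EquivLike.injective_comp, cons_injective_iff, and_comm]

theorem val_lt_card_filter_lt_iff [LinearOrder α] {g : Fin n → α} (hg : Monotone g) (b : α)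
    (i : Fin n) : (i : ℕ) < #{j | g j < b} ↔ g i < b := by
  constructor
  · intro hi
    by_contra hbi
    have : #{j | g j < b} ≤ #(Iio i) := card_le_card fun j hj => by
      simp only [mem_filter, mem_univ, true_and, mem_Iio] at hj ⊢
      by_contra hij
      exact hbi (lt_of_le_of_lt (hg (not_lt.1 hij)) hj)
    rw [card_Iio] at this
    omega
  · intro hi
    have : #(Iic i) ≤ #{j | g j < b} := card_le_card fun j hj => by
      simp only [mem_filter, mem_univ, true_and, mem_Iic] at hj ⊢
      exact (hg hj).trans_lt hi
    rw [card_Iic] at this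
    omega

theorem card_filter_strictMono_insertNth [LinearOrder α] {g : Fin n → α} {b : α}
    (hb : b ∉ Set.range g) :
    #{q : Fin (n + 1) | StrictMono (q.insertNth b g)} = if StrictMono g then 1 else 0 := by
  split_ifs with hg
  · have hlt := val_lt_card_filter_lt_iff hg.monotone b
    have hne : ∀ i, g i ≠ b := fun i h => hb ⟨i, h⟩
    have hk : #{i | g i < b} ≤ n := (card_filter_le _ _).trans (by simp)
    rw [card_eq_one]
    -- `b` has to be inserted right after the entries of `g` that are smaller than it
    refine ⟨⟨_, Nat.lt_succ_of_le hk⟩, ?_⟩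
    ext q
    simp only [mem_filter, mem_univ, true_and, mem_singleton, strictMono_insertNth_iff, hg]
    constructor
    · rintro ⟨hbelow, habove⟩
      ext
      by_contra hqk
      rcases Nat.lt_or_gt_of_ne hqk with h | h
      · have hi := habove ⟨q, by omega⟩ le_rfl
        exact ((hlt _).1 h).asymm hi
      · have hi := hbelow ⟨_, Nat.lt_of_lt_of_le h (Nat.lt_succ_iff.1 q.2)⟩ h
        exact lt_irrefl _ ((hlt _).2 hi)
    · rintro rfl
      refine ⟨fun i hi => (hlt i).1 hi, fun i hi => ?_⟩
      exact (not_lt.1 fun h => not_lt.2 hi ((hlt i).2 h)).lt_of_ne (hne i).symm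
  · rw [card_eq_zero, filter_eq_empty_iff]
    exact fun q _ h => hg ((strictMono_insertNth_iff q b g).1 h).1

end Fin

section Covers

variable {v : ℕ}

theorem card_filter_covers_insertNth {t : ℕ} (π : Equiv.Perm (Fin v)) {s : Fin t → Fin v}
    {x : Fin v} (hx : x ∉ Set.range s) :
    #{q : Fin (t + 1) | Covers π (q.insertNth x s)} = if Covers π s then 1 else 0 := by
  have hx' : π.symm x ∉ Set.range (π.symm ∘ s) := fun ⟨i, hi⟩ => hx ⟨i, π.symm.injective hi⟩
  have hcov : ∀ q : Fin (t + 1),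
      Covers π (q.insertNth x s) ↔ StrictMono (q.insertNth (π.symm x) (π.symm ∘ s)) :=
    fun q => by rw [← Fin.comp_insertNth]; rfl
  simp_rw [hcov]
  convert Fin.card_filter_strictMono_insertNth hx' using 2
  exact Iff.rfl

theorem sum_countP_covers_insertNth (X : Multiset (Equiv.Perm (Fin v))) {t : ℕ}
    {s : Fin t → Fin v} {x : Fin v} (hx : x ∉ Set.range s) :
    ∑ q : Fin (t + 1), X.countP (Covers · (q.insertNth x s)) = X.countP (Covers · s) := by
  simpa [card_filter_covers_insertNth _ hx, Multiset.sum_map_ite_eq_countP_mul] using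
    Multiset.sum_countP_mul univ X (fun (q : Fin (t + 1)) π => Covers π (q.insertNth x s)) 1

theorem IsPSCA.countP_covers {p l : ℕ} {X : Multiset (Equiv.Perm (Fin v))} (hX : IsPSCA v p l X)
    (hpv : p ≤ v) {t : ℕ} (htp : t ≤ p) (s : Fin t → Fin v) (hs : Injective s) :
    X.countP (Covers · s) = l * p.descFactorial (p - t) := by
  rcases htp.eq_or_lt with rfl | htp
  · simp [hX s hs]
  obtain ⟨x, hx⟩ : ∃ x, x ∉ Set.range s := by
    by_contra! h
    have := Fintype.card_le_of_surjective s h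
    simp only [Fintype.card_fin] at this
    omega
  have hsucc : p - t = p - (t + 1) + 1 := by omega
  calc X.countP (Covers · s)
      = ∑ q : Fin (t + 1), X.countP (Covers · (q.insertNth x s)) :=
        (sum_countP_covers_insertNth X hx).symm
    _ = ∑ q : Fin (t + 1), l * p.descFactorial (p - (t + 1)) := by
        refine sum_congr rfl fun q _ => hX.countP_covers hpv htp (q.insertNth x s) ?_
        exact Fin.insertNth_injective_iff.2 ⟨hs, hx⟩
    _ = l * p.descFactorial (p - t) := by
        rw [sum_const, card_univ, Fintype.card_fin, smul_eq_mul, hsucc, Nat.descFactorial_succ]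
        rw [show p - (p - (t + 1)) = t + 1 by omega]
        ring
termination_by p - t

end Covers

section Choose

variable {α : Type*} {a : ℕ}

theorem card_filter_strictMono_last_eq [LinearOrder α] [Fintype α] [LocallyFiniteOrderBot α]
    (m : α) : #{f : Fin (a + 1) → α | StrictMono f ∧ f (Fin.last a) = m} = (#(Iio m)).choose a := by
  let e : {f : Fin (a + 1) → α // StrictMono f ∧ f (Fin.last a) = m} ≃ (Fin a ↪o Iio m) :=
    { toFun := fun f => OrderEmbedding.ofStrictMono
        (fun i => ⟨f.1 i.castSucc, mem_Iio.2 (f.2.2 ▸ f.2.1 (Fin.castSucc_lt_last i) :)⟩)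
        fun i j h => f.2.1 (Fin.castSucc_lt_castSucc_iff.2 h)
      invFun := fun g => ⟨Fin.snoc (fun i => (g i : α)) m, by
        rw [← Fin.insertNth_last', Fin.strictMono_insertNth_iff]
        exact ⟨fun i j h => Subtype.coe_lt_coe.2 (g.strictMono h), fun i _ => mem_Iio.1 (g i).2,
          fun i h => absurd h (not_le.2 (Fin.castSucc_lt_last i))⟩, Fin.snoc_last _ _⟩
      left_inv := fun ⟨f, _, hf⟩ => Subtype.ext (by subst hf; exact Fin.snoc_init_self f)
      right_inv := fun g => by ext; simp }
  rw [← Fintype.card_subtype, Fintype.card_congr e, ← Nat.card_eq_fintype_card,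
    Nat.card_congr Set.powersetCard.ofFinEmbEquiv, Set.powersetCard.card, Nat.card_eq_fintype_card,
    Fintype.card_coe]

theorem card_filter_injective_last_eq [Fintype α] [DecidableEq α] (w : α) :
    #{s : Fin (a + 1) → α | Injective s ∧ s (Fin.last a) = w}
      = (Fintype.card α - 1).descFactorial a := by
  let e : {s : Fin (a + 1) → α // Injective s ∧ s (Fin.last a) = w} ≃ (Fin a ↪ {x // x ≠ w}) :=
    { toFun := fun s => ⟨fun i => ⟨s.1 i.castSucc, fun h =>
          (Fin.castSucc_lt_last i).ne (s.2.1 (h.trans s.2.2.symm))⟩,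
        fun i j h => Fin.castSucc_injective _ (s.2.1 (Subtype.ext_iff.1 h))⟩
      invFun := fun g => ⟨Fin.snoc (fun i => (g i : α)) w,
        Fin.snoc_injective_iff.2 ⟨Subtype.val_injective.comp g.injective, fun ⟨i, hi⟩ => (g i).2 hi⟩,
        Fin.snoc_last _ _⟩
      left_inv := fun ⟨s, _, hs⟩ => Subtype.ext (by subst hs; exact Fin.snoc_init_self s)
      right_inv := fun g => by ext; simp }
  rw [← Fintype.card_subtype, Fintype.card_congr e, Fintype.card_embedding_eq, Fintype.card_fin,
    Fintype.card_subtype_compl, Fintype.card_subtype_eq]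

end Choose

section Positions

variable {v p l : ℕ} {X : Multiset (Equiv.Perm (Fin v))}

theorem card_filter_covers_last_eq {a : ℕ} (π : Equiv.Perm (Fin v)) (w : Fin v) :
    #{s : Fin (a + 1) → Fin v | (Injective s ∧ s (Fin.last a) = w) ∧ Covers π s}
      = (π.symm w : ℕ).choose a := by
  rw [← Fin.card_Iio, ← card_filter_strictMono_last_eq]
  refine card_nbij' (π.symm ∘ ·) (π ∘ ·) (fun s hs => ?_) (fun f hf => ?_)
    (fun s _ => by ext; simp) (fun f _ => by ext; simp)
  · simp only [coe_filter, mem_univ, true_and, Set.mem_ofPred_eq] at hs ⊢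
    exact ⟨hs.2, by simp [hs.1.2]⟩
  · simp only [coe_filter, mem_univ, true_and, Set.mem_ofPred_eq] at hf ⊢
    refine ⟨⟨π.injective.comp hf.1.injective, by simp [hf.2]⟩, ?_⟩
    simpa [Covers] using hf.1

theorem IsPSCA.sum_map_choose_symm_apply (hX : IsPSCA v p l X) (hpv : p ≤ v) (w : Fin v)
    {a : ℕ} (hap : a < p) :
    (X.map fun π => (π.symm w : ℕ).choose a).sum
      = (v - 1).descFactorial a * (l * p.descFactorial (p - (a + 1))) := by
  set S : Finset (Fin (a + 1) → Fin v) := {s | Injective s ∧ s (Fin.last a) = w}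
  calc (X.map fun π => (π.symm w : ℕ).choose a).sum
      = (X.map fun π => #{s ∈ S | Covers π s}).sum := by
        simp only [S, filter_filter, card_filter_covers_last_eq]
    _ = ∑ s ∈ S, X.countP (Covers · s) := by
        simpa using (Multiset.sum_countP_mul S X (fun s π => Covers π s) 1).symm
    _ = #S * (l * p.descFactorial (p - (a + 1))) := by
        rw [← smul_eq_mul, ← sum_const]
        exact sum_congr rfl fun s hs => hX.countP_covers hpv hap s (mem_filter.1 hs).2.1
    _ = (v - 1).descFactorial a * (l * p.descFactorial (p - (a + 1))) := by
        rw [card_filter_injective_last_eq, Fintype.card_fin]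

theorem IsPSCA.dvd_sum_map_choose_symm_apply (hX : IsPSCA v p l X) (hpv : ¬ p ∣ v) (htv : p ≤ v) (w : Fin v) {a : ℕ} (hap : a < p) :
    p ∣ (X.map fun π => (π.symm w : ℕ).choose a).sum := by
  rw [hX.sum_map_choose_symm_apply htv w hap]
  rcases (Nat.succ_le_of_lt hap).eq_or_lt with hpa | hpa
  · obtain rfl : a = p - 1 := by omega
    exact dvd_mul_of_dvd_left (Nat.dvd_descFactorial_pred_of_not_dvd (by omega) hpv) _
  · obtain ⟨k, hk⟩ : ∃ k, p - (a + 1) = k + 1 := ⟨p - (a + 2), by omega⟩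
    obtain ⟨q, rfl⟩ : ∃ q, p = q + 1 := ⟨p - 1, by omega⟩
    rw [hk, Nat.succ_descFactorial_succ]
    exact dvd_mul_of_dvd_right (dvd_mul_of_dvd_right (dvd_mul_right _ _) _) _

end Positions

section Columns

variable {v : ℕ} (X : Multiset (Equiv.Perm (Fin v))) (w : Fin v)

theorem dcount_eq_countP (i : ℕ) : dcount v X w i = X.countP fun π => (π.symm w : ℕ) = i := by
  refine Multiset.countP_congr rfl fun π _ => propext ⟨?_, fun h => ⟨_, h, π.apply_symm_apply w⟩⟩
  rintro ⟨q, rfl, rfl⟩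
  simp

theorem sum_map_eq_sum_dcount_mul (f : ℕ → ℕ) :
    (X.map fun π => f (π.symm w)).sum = ∑ i ∈ range v, dcount v X w i * f i := by
  simp only [dcount_eq_countP, Multiset.sum_countP_mul, filter_eq, mem_range, Fin.is_lt,
    if_true, sum_singleton]

theorem sum_map_mod_eq_sum_dcount_mul {p : ℕ} (hp : 0 < p) (f : ℕ → ℕ) :
    (X.map fun π => f ((π.symm w : ℕ) % p)).sum
      = ∑ r ∈ range p, (∑ i ∈ range v with i % p = r, dcount v X w i) * f r := by
  rw [sum_map_eq_sum_dcount_mul X w (fun i => f (i % p)),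
    ← sum_fiberwise_of_maps_to (g := (· % p)) fun i _ => mem_range.2 (Nat.mod_lt i hp)]
  refine sum_congr rfl fun r _ => ?_
  rw [sum_mul]
  exact sum_congr rfl fun i hi => by rw [(mem_filter.1 hi).2]

end Columns

theorem stmt6_general (v p l : ℕ) (hp : p.Prime) (hpv : ¬ p ∣ v) (htv : p ≤ v)
    (X : Multiset (Equiv.Perm (Fin v))) (hX : IsPSCA v p l X)
    (w : Fin v) (j : ℕ) (hj : j ≤ p - 1) :
    p ∣ ∑ i ∈ (Finset.range v).filter (fun i => i % p = j), dcount v X w i := by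
  have := Fact.mk hp
  rw [← ZMod.natCast_eq_zero_iff]
  refine eq_zero_of_sum_mul_choose_eq_zero (n := p)
    (c := fun r => ((∑ i ∈ range v with i % p = r, dcount v X w i : ℕ) : ZMod p))
    (fun a hap => ?_) (by have := hp.pos; omega)
  calc ∑ r ∈ range p, ((∑ i ∈ range v with i % p = r, dcount v X w i : ℕ) : ZMod p) * r.choose a
      = ((X.map fun π => ((π.symm w : ℕ) % p).choose a).sum : ℕ) := by
        rw [sum_map_mod_eq_sum_dcount_mul X w hp.pos (·.choose a)]
        push_cast
        rfl
    _ = ((X.map fun π => (π.symm w : ℕ).choose a).sum : ℕ) := by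
        simp only [Nat.cast_multiset_sum, Multiset.map_map, comp_def, ZMod.natCast_choose_mod hap]
    _ = 0 := (ZMod.natCast_eq_zero_iff _ _).2 (hX.dvd_sum_map_choose_symm_apply hpv htv w hap)

/-- Theorem 2.3: for a PSCA(v, p, λ) with `p` an odd prime not dividing `v`,
the column sums of each residue class mod `p` of every symbol are divisible by `p`. -/
theorem stmt6 (v p l : ℕ) (hp : p.Prime) (hodd : Odd p) (hpv : ¬ p ∣ v) (hl : 1 ≤ l)
    (htv : p ≤ v)
    (X : Multiset (Equiv.Perm (Fin v))) (hX : IsPSCA v p l X)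
    (w : Fin v) (j : ℕ) (hj : j ≤ p - 1) :
    p ∣ ∑ i ∈ (Finset.range v).filter (fun i => i % p = j), dcount v X w i :=
  stmt6_general v p l hp hpv htv X hX w j hj
end

section
/- Let X be a PSCA(t+1, t, 1) and 0 ≤ i ≤ t. Then for every symbol w ∈ [t+1], d_w(i) is divisible by the binomial coefficient C(t, i). -/
open scoped Classical

/-! A permutation `π` of `[t+1]` covers exactly the `t + 1` sequences obtained from it by deleting
one entry. Those with `w` in position `i` arise either from `π(i) = w` by deleting one of the
`t - i` later entries, or from `π(i+1) = w` by deleting one of the `i + 1` earlier ones. Counting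
the pairs `(s, π)` with `s(i) = w` and `π` covering `s`, where each of the `t!` injective such `s`
is covered exactly once, gives `(t - i) d_w(i) + (i + 1) d_w(i+1) = t!`. Since
`(t - i) C(t, i) = (i + 1) C(t, i+1)` and `(i + 1) C(t, i+1)` divides `t!`, induction on `i` shows
`C(t, i) ∣ d_w(i)`. -/

open Finset

namespace Fin

lemma exists_eq_succAbove_of_strictMono {n : ℕ} {g : Fin n → Fin (n + 1)} (hg : StrictMono g) :
    ∃ k : Fin (n + 1), g = k.succAbove := by
  obtain ⟨k, hk⟩ : ∃ k, ∀ j, g j ≠ k := by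
    by_contra! h
    simpa using Fintype.card_le_of_surjective g h
  refine ⟨k, ?_⟩
  rw [orderEmbOfFin_unique (s := {k}ᶜ) (by simp [card_compl]) (by simpa using hk) hg,
    orderEmbOfFin_compl_singleton_eq_succAboveOrderEmb]
  rfl

lemma card_filter_succAbove_apply {n : ℕ} (i : Fin n) (P : Fin (n + 1) → Prop)
    [DecidablePred P] :
    #{k : Fin (n + 1) | P (k.succAbove i)} =
      (n - i) * (if P i.castSucc then 1 else 0) + (i + 1) * (if P i.succ then 1 else 0) := by
  have hgt : ∀ k ∈ Ioi i.castSucc, (if P (k.succAbove i) then 1 else 0) =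
      if P i.castSucc then 1 else 0 := fun k hk => by
    rw [succAbove_of_castSucc_lt _ _ (mem_Ioi.mp hk)]
  have hle : ∀ k ∈ Iic i.castSucc, (if P (k.succAbove i) then 1 else 0) =
      if P i.succ then 1 else 0 := fun k hk => by
    rw [succAbove_of_le_castSucc _ _ (mem_Iic.mp hk)]
  rw [card_filter, ← sum_filter_not_add_sum_filter _ (· ≤ i.castSucc), filter_ge_eq_Iic]
  simp only [not_le, filter_lt_eq_Ioi]
  rw [sum_congr rfl hgt, sum_congr rfl hle]
  simp only [Finset.sum_const, card_Ioi, card_Iic, smul_eq_mul, val_castSucc, Nat.add_sub_cancel]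

end Fin

lemma Nat.choose_dvd_of_sub_mul_add_succ_mul_eq_factorial {t : ℕ} {d : ℕ → ℕ}
    (hd : ∀ i < t, (t - i) * d i + (i + 1) * d (i + 1) = t.factorial) :
    ∀ i ≤ t, t.choose i ∣ d i := by
  intro i hi
  induction i with
  | zero => simp
  | succ j ih =>
    have hj : j < t := hi
    have hfac : (j + 1) * t.choose (j + 1) ∣ t.factorial :=
      ⟨j.factorial * (t - (j + 1)).factorial, by
        rw [← Nat.choose_mul_factorial_mul_factorial hi, Nat.factorial_succ]; ring⟩
    have hprev : (j + 1) * t.choose (j + 1) ∣ (t - j) * d j := by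
      rw [mul_comm, Nat.choose_succ_right_eq, mul_comm (t - j)]
      exact mul_dvd_mul_right (ih hj.le) _
    have hsucc : (j + 1) * d (j + 1) = t.factorial - (t - j) * d j := by
      have := hd j hj
      omega
    exact Nat.dvd_of_mul_dvd_mul_left j.succ_pos (hsucc ▸ Nat.dvd_sub hfac hprev)

lemma card_mul_card_filter_injective_apply_eq {α β : Type*} [Fintype α] [DecidableEq α]
    [Fintype β] [DecidableEq β] (a : α) (b : β) :
    Fintype.card β * #{f : α → β | Function.Injective f ∧ f a = b} =
      (Fintype.card β).descFactorial (Fintype.card α) := by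
  have hsymm : ∀ c, #{f : α → β | Function.Injective f ∧ f a = c} =
      #{f : α → β | Function.Injective f ∧ f a = b} := fun c =>
    card_equiv ⟨(Equiv.swap c b ∘ ·), (Equiv.swap c b ∘ ·), fun f => by ext; simp,
      fun f => by ext; simp⟩ fun f => by simp [Equiv.swap_apply_eq_iff]
  calc Fintype.card β * #{f : α → β | Function.Injective f ∧ f a = b}
      = ∑ c, #{f : α → β | Function.Injective f ∧ f a = c} := by
        simp [hsymm]
    _ = #{f : α → β | Function.Injective f} := by
        rw [card_eq_sum_card_fiberwise (f := fun f => f a) (t := univ) (by simp)]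
        simp only [filter_filter]
    _ = Fintype.card (α ↪ β) := by
        rw [← Fintype.card_subtype, Fintype.card_congr (Equiv.subtypeInjectiveEquivEmbedding α β)]
    _ = (Fintype.card β).descFactorial (Fintype.card α) := Fintype.card_embedding_eq

lemma card_filter_injective_apply_eq (t : ℕ) (i : Fin t) (w : Fin (t + 1)) :
    #{s : Fin t → Fin (t + 1) | Function.Injective s ∧ s i = w} = t.factorial := by
  have h := card_mul_card_filter_injective_apply_eq i w
  have hdesc : (t + 1).descFactorial t = (t + 1).factorial := by
    simpa using Nat.factorial_mul_descFactorial t.le_succ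
  rw [Fintype.card_fin, Fintype.card_fin, hdesc, Nat.factorial_succ] at h
  exact Nat.eq_of_mul_eq_mul_left t.succ_pos h

section PSCA

variable {t : ℕ}

lemma Covers.injective {v : ℕ} {π : Equiv.Perm (Fin v)} {s : Fin t → Fin v} (h : Covers π s) :
    Function.Injective s :=
  fun _ _ hab => StrictMono.injective h (by simp [hab])

lemma covers_iff_exists_eq_comp_succAbove {π : Equiv.Perm (Fin (t + 1))}
    {s : Fin t → Fin (t + 1)} : Covers π s ↔ ∃ k : Fin (t + 1), s = π ∘ k.succAbove := by
  constructor
  · intro h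
    obtain ⟨k, hk⟩ := Fin.exists_eq_succAbove_of_strictMono h
    exact ⟨k, by rw [← hk]; ext; simp⟩
  · rintro ⟨k, rfl⟩
    simpa [Covers] using Fin.strictMono_succAbove k

lemma card_filter_covers_apply_eq (π : Equiv.Perm (Fin (t + 1))) (i : Fin t) (w : Fin (t + 1)) :
    #{s : Fin t → Fin (t + 1) | Covers π s ∧ s i = w} =
      (t - i) * (if π i.castSucc = w then 1 else 0) + (i + 1) * (if π i.succ = w then 1 else 0) := by
  rw [← Fin.card_filter_succAbove_apply i (π · = w)]
  refine (card_bij (fun k _ => π ∘ k.succAbove) ?_ ?_ ?_).symm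
  · intro k hk
    simp only [mem_filter, mem_univ, true_and] at hk ⊢
    exact ⟨covers_iff_exists_eq_comp_succAbove.mpr ⟨k, rfl⟩, hk⟩
  · intro k₁ _ k₂ _ h
    exact Fin.succAbove_left_injective (π.injective.comp_left h)
  · intro s hs
    simp only [mem_filter, mem_univ, true_and] at hs
    obtain ⟨k, rfl⟩ := covers_iff_exists_eq_comp_succAbove.mp hs.1
    exact ⟨k, by simpa using hs.2, rfl⟩

lemma sum_countP_covers (X : Multiset (Equiv.Perm (Fin (t + 1)))) (i : Fin t) (w : Fin (t + 1)) :
    ∑ s ∈ {s : Fin t → Fin (t + 1) | Function.Injective s ∧ s i = w}, X.countP (Covers · s) =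
      (t - i) * X.countP (· i.castSucc = w) + (i + 1) * X.countP (· i.succ = w) := by
  induction X using Multiset.induction with
  | empty => simp
  | cons π X ih =>
    have hπ : ∑ s ∈ {s : Fin t → Fin (t + 1) | Function.Injective s ∧ s i = w},
        (if Covers π s then 1 else 0) = #{s : Fin t → Fin (t + 1) | Covers π s ∧ s i = w} := by
      rw [← card_filter, filter_filter]
      congr 1
      ext s
      simp only [mem_filter, mem_univ, true_and]
      exact ⟨fun h => ⟨h.2, h.1.2⟩, fun h => ⟨⟨h.1.injective, h.2⟩, h.1⟩⟩
    simp only [Multiset.countP_cons, sum_add_distrib, ih, hπ, card_filter_covers_apply_eq]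
    ring

lemma dcount_eq_countP_s9 (X : Multiset (Equiv.Perm (Fin (t + 1)))) (w : Fin (t + 1))
    (j : Fin (t + 1)) : dcount (t + 1) X w j = X.countP (· j = w) :=
  Multiset.countP_congr rfl fun _ _ =>
    propext ⟨fun ⟨_, hp, hpw⟩ => Fin.ext hp ▸ hpw, fun h => ⟨j, rfl, h⟩⟩

lemma IsPSCA.sub_mul_dcount_add_succ_mul_dcount_succ {X : Multiset (Equiv.Perm (Fin (t + 1)))}
    (hX : IsPSCA (t + 1) t 1 X) (w : Fin (t + 1)) {i : ℕ} (hi : i < t) :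
    (t - i) * dcount (t + 1) X w i + (i + 1) * dcount (t + 1) X w (i + 1) = t.factorial := by
  have h := sum_countP_covers X ⟨i, hi⟩ w
  rw [sum_congr rfl fun s hs => hX s (mem_filter.mp hs).2.1, sum_const, smul_eq_mul, mul_one,
    card_filter_injective_apply_eq] at h
  rw [show dcount (t + 1) X w i = _ from dcount_eq_countP_s9 X w (Fin.castSucc ⟨i, hi⟩),
    show dcount (t + 1) X w (i + 1) = _ from dcount_eq_countP_s9 X w (Fin.succ ⟨i, hi⟩)]
  exact h.symm

end PSCA

theorem stmt9_general (t : ℕ)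
    (X : Multiset (Equiv.Perm (Fin (t + 1)))) (hX : IsPSCA (t + 1) t 1 X)
    (i : ℕ) (hi : i ≤ t) (w : Fin (t + 1)) :
    Nat.choose t i ∣ dcount (t + 1) X w i :=
  Nat.choose_dvd_of_sub_mul_add_succ_mul_eq_factorial
    (fun _ hj => hX.sub_mul_dcount_add_succ_mul_dcount_succ w hj) i hi

/-- Corollary 2.6: in a PSCA(t+1, t, 1), `C(t, i)` divides `d_w(i)` for every symbol `w`. -/
theorem stmt9 (t : ℕ) (ht : 2 ≤ t)
    (X : Multiset (Equiv.Perm (Fin (t + 1)))) (hX : IsPSCA (t + 1) t 1 X)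
    (i : ℕ) (hi : i ≤ t) (w : Fin (t + 1)) :
    Nat.choose t i ∣ dcount (t + 1) X w i :=
  stmt9_general t X hX i hi w
end
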